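/- arXiv:1611.00920 — 5 statements merged into one kernel-verified Lean document; each statement's English description precedes it below -/
import Mathlib

section
/- Given a surjective linear map π : V₁ → V₂ between finite-dimensional real vector spaces and a singular norm F₁ on V₁, there exists a unique singular norm F₂ on V₂ such that π({w : F₁(w) ≤ 1}) = {u : F₂(u) ≤ 1}. -/
/-- A singular norm: continuous, nonnegative, positive on nonzero vectors,
positively homogeneous of degree one, and convex. -/
def IsSingularNorm {V : Type*} [NormedAddCommGroup V] [NormedSpace ℝ V] (F : V → ℝ) : Prop :=
  Continuous F ∧ (∀ v, 0 ≤ F v) ∧ (∀ v, v ≠ 0 → 0 < F v) ∧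
    (∀ (c : ℝ), 0 ≤ c → ∀ v, F (c • v) = c * F v) ∧ ConvexOn ℝ Set.univ F

section Aux

variable {V : Type*} [NormedAddCommGroup V] [NormedSpace ℝ V]

lemma sn_zero {F : V → ℝ} (hF : IsSingularNorm F) : F 0 = 0 := by
  have h := hF.2.2.2.1 0 le_rfl 0
  simpa using h

lemma sn_add {F : V → ℝ} (hF : IsSingularNorm F) (v w : V) :
    F (v + w) ≤ F v + F w := by
  have hconv := hF.2.2.2.2.2 (Set.mem_univ v) (Set.mem_univ w)
      (by norm_num : (0:ℝ) ≤ 1/2) (by norm_num : (0:ℝ) ≤ 1/2) (by norm_num)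
  simp only [smul_eq_mul] at hconv
  have h2 : F (v + w) = 2 * F ((1/2 : ℝ) • (v + w)) := by
    rw [hF.2.2.2.1 (1/2) (by norm_num)]; ring
  rw [smul_add] at h2
  linarith

/-- A singular norm is bounded above by a multiple of the norm. -/
lemma sn_le {F : V → ℝ} (hF : IsSingularNorm F) : ∃ C : ℝ, 0 ≤ C ∧ ∀ v, F v ≤ C * ‖v‖ := by
  have h0 : F 0 = 0 := sn_zero hF
  have hc : ContinuousAt F 0 := hF.1.continuousAt
  rw [Metric.continuousAt_iff] at hc
  obtain ⟨δ, hδ, hδ'⟩ := hc 1 one_pos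
  refine ⟨2 / δ, by positivity, fun v => ?_⟩
  rcases eq_or_ne v 0 with rfl | hv
  · simp [h0]
  have hn : (0:ℝ) < ‖v‖ := norm_pos_iff.2 hv
  set t : ℝ := δ / (2 * ‖v‖) with ht
  have htpos : 0 < t := by positivity
  have hmem : dist (t • v) 0 < δ := by
    rw [dist_zero_right, norm_smul, Real.norm_eq_abs, abs_of_pos htpos, ht]
    have h : δ / (2 * ‖v‖) * ‖v‖ = δ / 2 := by field_simp
    rw [h]; linarith
  have hF1 : F (t • v) < 1 := by
    have h := hδ' hmem
    rw [Real.dist_eq, h0, sub_zero] at h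
    calc F (t • v) ≤ |F (t • v)| := le_abs_self _
      _ < 1 := h
  have heq : F (t • v) = t * F v := hF.2.2.2.1 t htpos.le v
  rw [heq] at hF1
  have key : t * (2 / δ * ‖v‖) = 1 := by rw [ht]; field_simp
  have h2 : t * F v < t * (2 / δ * ‖v‖) := by linarith
  exact ((mul_lt_mul_iff_right₀ htpos).mp h2).le


/-- On a nontrivial finite-dimensional space, a singular norm is bounded below
by a positive multiple of the norm. -/
lemma sn_lower {V : Type*} [NormedAddCommGroup V] [NormedSpace ℝ V] [FiniteDimensional ℝ V]
    {F : V → ℝ} (hF : IsSingularNorm F) (w₀ : V) (hw₀ : w₀ ≠ 0) :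
    ∃ c : ℝ, 0 < c ∧ ∀ v, c * ‖v‖ ≤ F v := by
  have hsph : IsCompact (Metric.sphere (0:V) 1) := isCompact_sphere 0 1
  have hne : (Metric.sphere (0:V) 1).Nonempty := by
    refine ⟨‖w₀‖⁻¹ • w₀, ?_⟩
    have hn : (0:ℝ) < ‖w₀‖ := norm_pos_iff.2 hw₀
    simp [norm_smul, abs_of_pos (inv_pos.2 hn), inv_mul_cancel₀ hn.ne']
  obtain ⟨v₀, hv₀mem, hv₀min⟩ := hsph.exists_isMinOn hne hF.1.continuousOn
  have hv₀norm : ‖v₀‖ = 1 := by simpa using hv₀mem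
  have hv₀ne : v₀ ≠ 0 := by
    intro h; rw [h] at hv₀norm; simp at hv₀norm
  refine ⟨F v₀, hF.2.2.1 v₀ hv₀ne, fun v => ?_⟩
  rcases eq_or_ne v 0 with rfl | hv
  · simp [sn_zero hF]
  have hn : (0:ℝ) < ‖v‖ := norm_pos_iff.2 hv
  have hmem : ‖v‖⁻¹ • v ∈ Metric.sphere (0:V) 1 := by
    simp [norm_smul, abs_of_pos (inv_pos.2 hn), inv_mul_cancel₀ hn.ne']
  have hle : F v₀ ≤ F (‖v‖⁻¹ • v) := hv₀min hmem
  rw [hF.2.2.2.1 _ (inv_pos.2 hn).le] at hle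
  calc F v₀ * ‖v‖ ≤ ‖v‖⁻¹ * F v * ‖v‖ := by
        have := hF.2.1 v
        nlinarith
    _ = F v := by field_simp
  
/-- The infimum of a singular norm over a fiber of a linear map is attained. -/
lemma sn_exists_min {V₁ V₂ : Type*} [NormedAddCommGroup V₁] [NormedSpace ℝ V₁]
    [FiniteDimensional ℝ V₁] [NormedAddCommGroup V₂] [NormedSpace ℝ V₂]
    (π : V₁ →ₗ[ℝ] V₂) {F₁ : V₁ → ℝ} (hF₁ : IsSingularNorm F₁) (u : V₂)
    (hu : ∃ w, π w = u) :
    ∃ w, π w = u ∧ ∀ w', π w' = u → F₁ w ≤ F₁ w' := by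
  rcases eq_or_ne u 0 with rfl | h0
  · exact ⟨0, map_zero π, fun w' _ => by rw [sn_zero hF₁]; exact hF₁.2.1 w'⟩
  obtain ⟨w₀, hw₀⟩ := hu
  have hw₀ne : w₀ ≠ 0 := by
    intro h; rw [h, map_zero] at hw₀; exact h0 hw₀.symm
  obtain ⟨c, hc, hlow⟩ := sn_lower hF₁ w₀ hw₀ne
  set K : Set V₁ := (π ⁻¹' {u}) ∩ {w | F₁ w ≤ F₁ w₀} with hK
  have hScl : IsClosed (π ⁻¹' ({u} : Set V₂)) :=
    IsClosed.preimage π.continuous_of_finiteDimensional isClosed_singleton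
  have hKcl : IsClosed K := hScl.inter (isClosed_le hF₁.1 continuous_const)
  have hKbd : Bornology.IsBounded K := by
    have : K ⊆ Metric.closedBall 0 (F₁ w₀ / c) := by
      intro w ⟨_, hw2⟩
      rw [Metric.mem_closedBall, dist_zero_right]
      rw [le_div_iff₀ hc]
      calc ‖w‖ * c = c * ‖w‖ := mul_comm _ _
        _ ≤ F₁ w := hlow w
        _ ≤ F₁ w₀ := hw2
    exact (Metric.isBounded_closedBall).subset this
  have hKcp : IsCompact K := Metric.isCompact_of_isClosed_isBounded hKcl hKbd
  have hKne : K.Nonempty := ⟨w₀, by simp [hK, hw₀]⟩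
  obtain ⟨w, hwK, hwmin⟩ := hKcp.exists_isMinOn hKne hF₁.1.continuousOn
  refine ⟨w, hwK.1, fun w' hw' => ?_⟩
  rcases le_or_gt (F₁ w') (F₁ w₀) with h | h
  · exact hwmin (⟨hw', h⟩ : w' ∈ K)
  · exact le_trans (hwmin (⟨hw₀, le_refl (F₁ w₀)⟩ : w₀ ∈ K)) h.le


lemma sn_le_of_ball {V : Type*} [NormedAddCommGroup V] [NormedSpace ℝ V]
    {F G : V → ℝ} (hF : IsSingularNorm F) (hG : IsSingularNorm G)
    (h : {v | F v ≤ 1} ⊆ {v | G v ≤ 1}) : ∀ v, G v ≤ F v := by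
  intro v
  rcases eq_or_ne v 0 with rfl | hv
  · rw [sn_zero hF, sn_zero hG]
  have hFv : 0 < F v := hF.2.2.1 v hv
  have hx : ((F v)⁻¹ • v) ∈ {v | F v ≤ 1} := by
    show F ((F v)⁻¹ • v) ≤ 1
    rw [hF.2.2.2.1 _ (inv_pos.2 hFv).le, inv_mul_cancel₀ hFv.ne']
  have h2 := h hx
  rw [Set.mem_setOf_eq, hG.2.2.2.1 _ (inv_pos.2 hFv).le] at h2
  calc G v = F v * ((F v)⁻¹ * G v) := by field_simp
    _ ≤ F v * 1 := mul_le_mul_of_nonneg_left h2 hFv.le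
    _ = F v := mul_one _

lemma sn_unique {V : Type*} [NormedAddCommGroup V] [NormedSpace ℝ V]
    {F G : V → ℝ} (hF : IsSingularNorm F) (hG : IsSingularNorm G)
    (h : {v | F v ≤ 1} = {v | G v ≤ 1}) : F = G :=
  funext fun v => le_antisymm (sn_le_of_ball hG hF h.superset v)
    (sn_le_of_ball hF hG h.subset v)

end Aux

/-- Given a surjective linear map `π : V₁ → V₂` and a singular norm `F₁` on `V₁`, there is a
unique singular norm `F₂` on `V₂` making `π` a Finsler submersion, i.e. with
`π({F₁ ≤ 1}) = {F₂ ≤ 1}`. -/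
theorem stmt_2 {V₁ V₂ : Type*} [NormedAddCommGroup V₁] [NormedSpace ℝ V₁]
    [FiniteDimensional ℝ V₁] [NormedAddCommGroup V₂] [NormedSpace ℝ V₂]
    [FiniteDimensional ℝ V₂]
    (π : V₁ →ₗ[ℝ] V₂) (hπ : Function.Surjective π)
    (F₁ : V₁ → ℝ) (hF₁ : IsSingularNorm F₁) :
    ∃! F₂ : V₂ → ℝ, IsSingularNorm F₂ ∧
      π '' {w : V₁ | F₁ w ≤ 1} = {u : V₂ | F₂ u ≤ 1} := by
  choose m hm1 hm2 using fun u => sn_exists_min π hF₁ u (hπ u)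
  set F₂ : V₂ → ℝ := fun u => F₁ (m u) with hF₂def
  have hle : ∀ w, F₂ (π w) ≤ F₁ w := fun w => hm2 (π w) w rfl
  have hnn : ∀ u, 0 ≤ F₂ u := fun u => hF₁.2.1 (m u)
  have hzero : F₂ 0 = 0 :=
    le_antisymm (by simpa [hF₂def, sn_zero hF₁] using hm2 0 0 (map_zero π)) (hnn 0)
  have hpos : ∀ u, u ≠ 0 → 0 < F₂ u := by
    intro u hu
    apply hF₁.2.2.1
    intro h
    exact hu (by rw [← hm1 u, h, map_zero])
  have hhom : ∀ (c : ℝ), 0 ≤ c → ∀ u, F₂ (c • u) = c * F₂ u := by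
    intro c hc u
    rcases hc.lt_or_eq with h | h
    · apply le_antisymm
      · have h1 := hm2 (c • u) (c • m u) (by rw [map_smul, hm1])
        rwa [hF₁.2.2.2.1 c hc] at h1
      · have h2 := hm2 u (c⁻¹ • m (c • u))
          (by rw [map_smul, hm1, smul_smul, inv_mul_cancel₀ h.ne', one_smul])
        rw [hF₁.2.2.2.1 c⁻¹ (inv_pos.2 h).le] at h2
        calc c * F₂ u ≤ c * (c⁻¹ * F₂ (c • u)) :=
              mul_le_mul_of_nonneg_left h2 hc
          _ = F₂ (c • u) := by field_simp
    · rw [← h, zero_smul, hzero, zero_mul]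
  have hsub : ∀ u v, F₂ (u + v) ≤ F₂ u + F₂ v := by
    intro u v
    have h1 := hm2 (u + v) (m u + m v) (by rw [map_add, hm1, hm1])
    exact h1.trans (sn_add hF₁ (m u) (m v))
  have hconv : ConvexOn ℝ Set.univ F₂ := by
    refine ⟨convex_univ, fun x _ y _ a b ha hb hab => ?_⟩
    calc F₂ (a • x + b • y) ≤ F₂ (a • x) + F₂ (b • y) := hsub _ _
      _ = a * F₂ x + b * F₂ y := by rw [hhom a ha, hhom b hb]
      _ = a • F₂ x + b • F₂ y := by simp [smul_eq_mul]
  obtain ⟨C, hC, hCle⟩ := sn_le hF₁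
  obtain ⟨g, hg⟩ := π.exists_rightInverse_of_surjective (LinearMap.range_eq_top.2 hπ)
  set G : V₂ →L[ℝ] V₁ := LinearMap.toContinuousLinearMap g with hGdef
  have hbound : ∀ u, F₂ u ≤ C * ‖G‖ * ‖u‖ := by
    intro u
    have hgu : π (g u) = u := by
      have h := LinearMap.congr_fun hg u; simpa using h
    calc F₂ u ≤ F₁ (g u) := hm2 u (g u) hgu
      _ ≤ C * ‖g u‖ := hCle _
      _ = C * ‖G u‖ := rfl
      _ ≤ C * (‖G‖ * ‖u‖) := mul_le_mul_of_nonneg_left (G.le_opNorm u) hC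
      _ = C * ‖G‖ * ‖u‖ := by ring
  have hcont : Continuous F₂ := by
    set L : ℝ := C * ‖G‖ with hLdef
    have hL : 0 ≤ L := by positivity
    have hlip : ∀ u v : V₂, F₂ u - F₂ v ≤ L * ‖u - v‖ := by
      intro u v
      have h1 := hsub v (u - v)
      have h2 : v + (u - v) = u := by abel
      rw [h2] at h1
      linarith [hbound (u - v)]
    have : LipschitzWith (Real.toNNReal L) F₂ := by
      apply LipschitzWith.of_dist_le_mul
      intro u v
      rw [Real.dist_eq, dist_eq_norm, Real.coe_toNNReal L hL, abs_sub_le_iff]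
      refine ⟨hlip u v, ?_⟩
      have := hlip v u
      rwa [norm_sub_rev] at this
    exact this.continuous
  have hset : π '' {w : V₁ | F₁ w ≤ 1} = {u : V₂ | F₂ u ≤ 1} := by
    ext u
    constructor
    · rintro ⟨w, hw, rfl⟩
      exact le_trans (hle w) hw
    · intro hu
      exact ⟨m u, hu, hm1 u⟩
  have hF₂sn : IsSingularNorm F₂ := ⟨hcont, hnn, hpos, hhom, hconv⟩
  refine ⟨F₂, ⟨hF₂sn, hset⟩, ?_⟩
  intro F₃ hF₃
  exact sn_unique hF₃.1 hF₂sn (by rw [← hF₃.2, hset])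
end

section
/- Let Fₙ be singular norms on a finite-dimensional real vector space V converging pointwise to a singular norm F. If for each n and some fixed surjective linear map pr : g → V from a finite-dimensional vector space g with singular norms F̃ₙ on g, one has pr({ũ : F̃ₙ(ũ) ≤ 1}) = {u : Fₙ(u) ≤ 1}, and F̃ₙ converges uniformly on compact sets to a singular norm F̃, then pr({ũ : F̃(ũ) ≤ 1}) = {u : F(u) ≤ 1}. -/
lemma isn_zero {V : Type*} [NormedAddCommGroup V] [NormedSpace ℝ V] {G : V → ℝ}
    (h : IsSingularNorm G) : G 0 = 0 := by
  have := h.2.2.2.1 0 le_rfl 0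
  simpa using this

/-- A singular norm on a finite-dimensional space is bounded below by a multiple of the norm. -/
lemma isn_lower {g : Type*} [NormedAddCommGroup g] [NormedSpace ℝ g] [FiniteDimensional ℝ g]
    {G : g → ℝ} (h : IsSingularNorm G) : ∃ c > 0, ∀ u, c * ‖u‖ ≤ G u := by
  by_cases hne : (Metric.sphere (0:g) 1).Nonempty
  · obtain ⟨x, hx, hmin'⟩ := (isCompact_sphere (0:g) 1).exists_isMinOn hne h.1.continuousOn
    have hmin : ∀ y ∈ Metric.sphere (0:g) 1, G x ≤ G y := fun y hy => hmin' hy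
    have hx1 : ‖x‖ = 1 := by simpa using hx
    have hxne : x ≠ 0 := by
      intro h0; rw [h0] at hx1; simp at hx1
    refine ⟨G x, h.2.2.1 x hxne, fun u => ?_⟩
    rcases eq_or_ne u 0 with rfl | hu
    · simp [isn_zero h]
    · have hnu : (0:ℝ) < ‖u‖ := norm_pos_iff.mpr hu
      have hmem : ‖u‖⁻¹ • u ∈ Metric.sphere (0:g) 1 := by
        simp [norm_smul, abs_of_pos (inv_pos.mpr hnu), inv_mul_cancel₀ hnu.ne']
      have h1 : G x ≤ G (‖u‖⁻¹ • u) := hmin _ hmem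
      have h2 : G u = ‖u‖ * G (‖u‖⁻¹ • u) := by
        conv_lhs => rw [← smul_inv_smul₀ hnu.ne' u]
        rw [h.2.2.2.1 ‖u‖ hnu.le]
      rw [h2, mul_comm (G x)]
      exact mul_le_mul_of_nonneg_left h1 hnu.le
  · refine ⟨1, one_pos, fun u => ?_⟩
    have hu : u = 0 := by
      by_contra hu
      have hnu : (0:ℝ) < ‖u‖ := norm_pos_iff.mpr hu
      exact hne ⟨‖u‖⁻¹ • u, by
        simp [norm_smul, abs_of_pos (inv_pos.mpr hnu), inv_mul_cancel₀ hnu.ne']⟩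
    simp [hu, isn_zero h]

set_option maxHeartbeats 1000000 in
/-- If singular norms `Fₙ` on `V` converge pointwise to a singular norm `F`, each `Fₙ` is
induced by a singular norm `F̃ₙ` on `g` via the surjective linear map `pr` (submersion of unit
balls), and `F̃ₙ → F̃` uniformly on compact sets, then `F` is induced by `F̃` via `pr`. -/
theorem stmt_6 {g V : Type*} [NormedAddCommGroup g] [NormedSpace ℝ g] [FiniteDimensional ℝ g]
    [NormedAddCommGroup V] [NormedSpace ℝ V] [FiniteDimensional ℝ V]
    (pr : g →ₗ[ℝ] V) (hpr : Function.Surjective pr)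
    (Fn : ℕ → V → ℝ) (F : V → ℝ) (Ftn : ℕ → g → ℝ) (Ft : g → ℝ)
    (hFn : ∀ n, IsSingularNorm (Fn n)) (hF : IsSingularNorm F)
    (hFtn : ∀ n, IsSingularNorm (Ftn n)) (hFt : IsSingularNorm Ft)
    (hptwise : ∀ v : V, Filter.Tendsto (fun n => Fn n v) Filter.atTop (nhds (F v)))
    (hsub : ∀ n, pr '' {u : g | Ftn n u ≤ 1} = {u : V | Fn n u ≤ 1})
    (hunif : ∀ K : Set g, IsCompact K → TendstoUniformlyOn Ftn Ft Filter.atTop K) :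
    pr '' {u : g | Ft u ≤ 1} = {u : V | F u ≤ 1} := by
  obtain ⟨c, hc, hlow⟩ := isn_lower hFt
  -- membership form of hsub
  have hmem : ∀ n, ∀ w : g, Ftn n w ≤ 1 → Fn n (pr w) ≤ 1 := by
    intro n w hw
    have : pr w ∈ {u : V | Fn n u ≤ 1} := by
      rw [← hsub n]; exact ⟨w, hw, rfl⟩
    exact this
  -- key pointwise inequality
  have key : ∀ n (u : g), Fn n (pr u) ≤ Ftn n u := by
    intro n u
    rcases lt_or_ge 0 (Ftn n u) with h | h
    · have h1 : Ftn n ((Ftn n u)⁻¹ • u) ≤ 1 := by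
        rw [(hFtn n).2.2.2.1 _ (by positivity), inv_mul_cancel₀ h.ne']
      have h2 := hmem n _ h1
      rw [map_smul, (hFn n).2.2.2.1 _ (by positivity)] at h2
      have h3 := mul_le_mul_of_nonneg_left h2 h.le
      rwa [← mul_assoc, mul_inv_cancel₀ h.ne', one_mul, mul_one] at h3
    · have h0 : Ftn n u = 0 := le_antisymm h ((hFtn n).2.1 u)
      rw [h0]
      by_contra hpos
      push_neg at hpos
      have hcu : ∀ t : ℝ, 0 ≤ t → t * Fn n (pr u) ≤ 1 := by
        intro t ht
        have h1 : Ftn n (t • u) ≤ 1 := by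
          rw [(hFtn n).2.2.2.1 t ht, h0, mul_zero]; norm_num
        have h2 := hmem n _ h1
        rwa [map_smul, (hFn n).2.2.2.1 t ht] at h2
      have h2 := hcu (2 / Fn n (pr u)) (by positivity)
      rw [div_mul_cancel₀ _ hpos.ne'] at h2
      linarith
  -- first inclusion
  have sub1 : pr '' {u : g | Ft u ≤ 1} ⊆ {u : V | F u ≤ 1} := by
    rintro _ ⟨u, hu, rfl⟩
    have h1 : Filter.Tendsto (fun n => Ftn n u) Filter.atTop (nhds (Ft u)) :=
      (hunif {u} isCompact_singleton).tendsto_at (Set.mem_singleton u)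
    have hle : F (pr u) ≤ Ft u :=
      le_of_tendsto_of_tendsto' (hptwise (pr u)) h1 (fun n => key n u)
    exact hle.trans hu
  -- the unit ball of Ft is compact
  have hball : {u : g | Ft u ≤ 1} ⊆ Metric.closedBall 0 c⁻¹ := by
    intro u hu
    rw [Metric.mem_closedBall, dist_zero_right, inv_eq_one_div, le_div_iff₀ hc]
    have := hlow u
    have hu' : Ft u ≤ 1 := hu
    nlinarith
  have hKcpt : IsCompact {u : g | Ft u ≤ 1} :=
    (isCompact_closedBall 0 c⁻¹).of_isClosed_subset
      (isClosed_le hFt.1 continuous_const) hball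
  have hclosed : IsClosed (pr '' {u : g | Ft u ≤ 1}) :=
    (hKcpt.image pr.continuous_of_finiteDimensional).isClosed
  -- uniform lower bound for Ftn, eventually in n
  have hunifN : ∃ N : ℕ, ∀ n ≥ N, ∀ u : g, Ftn n u ≤ 1 → ‖u‖ ≤ 2 / c := by
    have hS := Metric.tendstoUniformlyOn_iff.mp
      (hunif (Metric.sphere (0:g) 1) (isCompact_sphere 0 1)) (c/2) (by positivity)
    obtain ⟨N, hN⟩ := Filter.eventually_atTop.mp hS
    refine ⟨N, fun n hn u hu => ?_⟩
    rcases eq_or_ne u 0 with rfl | hune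
    · simp; positivity
    · have hnu : (0:ℝ) < ‖u‖ := norm_pos_iff.mpr hune
      have hmemS : ‖u‖⁻¹ • u ∈ Metric.sphere (0:g) 1 := by
        simp [norm_smul, abs_of_pos (inv_pos.mpr hnu), inv_mul_cancel₀ hnu.ne']
      have hdist := hN n hn _ hmemS
      rw [Real.dist_eq, abs_lt] at hdist
      have hFtlow : c ≤ Ft (‖u‖⁻¹ • u) := by
        have := hlow (‖u‖⁻¹ • u)
        have hns : ‖‖u‖⁻¹ • u‖ = 1 := by
          simp [norm_smul, abs_of_pos (inv_pos.mpr hnu), inv_mul_cancel₀ hnu.ne']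
        rwa [hns, mul_one] at this
      have hFtn_low : c / 2 ≤ Ftn n (‖u‖⁻¹ • u) := by linarith [hdist.1]
      have heq : Ftn n u = ‖u‖ * Ftn n (‖u‖⁻¹ • u) := by
        conv_lhs => rw [← smul_inv_smul₀ hnu.ne' u]
        rw [(hFtn n).2.2.2.1 ‖u‖ hnu.le]
      have : ‖u‖ * (c / 2) ≤ 1 := by
        calc ‖u‖ * (c / 2) ≤ ‖u‖ * Ftn n (‖u‖⁻¹ • u) :=
              mul_le_mul_of_nonneg_left hFtn_low hnu.le
          _ = Ftn n u := heq.symm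
          _ ≤ 1 := hu
      rw [le_div_iff₀ hc]
      nlinarith
  -- open sublevel set of F is in the image
  have sub2 : {v : V | F v < 1} ⊆ pr '' {u : g | Ft u ≤ 1} := by
    intro v hv
    obtain ⟨N, hN⟩ := hunifN
    have hev : ∀ᶠ n in Filter.atTop, Fn n v < 1 :=
      (hptwise v).eventually (Filter.Tendsto.eventually_lt_const hv (Filter.tendsto_id))
    obtain ⟨N1, hN1⟩ := Filter.eventually_atTop.mp hev
    set M := max N N1 with hM
    have hex : ∀ k : ℕ, ∃ u : g, Ftn (k + M) u ≤ 1 ∧ pr u = v := by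
      intro k
      have hv1 : Fn (k + M) v ≤ 1 :=
        (hN1 _ (le_trans (le_max_right _ _) (Nat.le_add_left M k))).le
      have : v ∈ pr '' {u : g | Ftn (k + M) u ≤ 1} := by
        rw [hsub]; exact hv1
      obtain ⟨u, hu, hup⟩ := this
      exact ⟨u, hu, hup⟩
    choose s hs1 hs2 using hex
    have hsK : ∀ k, s k ∈ Metric.closedBall (0:g) (2/c) := by
      intro k
      rw [Metric.mem_closedBall, dist_zero_right]
      exact hN (k + M) (le_trans (le_max_left _ _) (Nat.le_add_left M k)) _ (hs1 k)
    obtain ⟨x, hxK, φ, hφ, hconv⟩ :=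
      (isCompact_closedBall (0:g) (2/c)).tendsto_subseq hsK
    have hidx : Filter.Tendsto (fun k => φ k + M) Filter.atTop Filter.atTop :=
      Filter.tendsto_atTop_mono (fun k => Nat.le_add_right (φ k) M) hφ.tendsto_atTop
    have hpx : pr x = v := by
      have h1 : Filter.Tendsto (fun k => pr (s (φ k))) Filter.atTop (nhds (pr x)) :=
        (pr.continuous_of_finiteDimensional.tendsto x).comp hconv
      have h2 : (fun k => pr (s (φ k))) = fun _ => v := funext fun k => hs2 _
      rw [h2] at h1
      exact tendsto_nhds_unique h1 tendsto_const_nhds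
    have hUO : TendstoUniformlyOn (fun k => Ftn (φ k + M)) Ft Filter.atTop
        (Metric.closedBall (0:g) (2/c)) := by
      intro u hu
      exact hidx.eventually (hunif _ (isCompact_closedBall _ _) u hu)
    have hcomp : Filter.Tendsto (fun k => Ftn (φ k + M) (s (φ k))) Filter.atTop
        (nhds (Ft x)) := by
      refine hUO.tendsto_comp hFt.1.continuousWithinAt ?_
      exact tendsto_nhdsWithin_of_tendsto_nhds_of_eventually_within _ hconv
        (Filter.Eventually.of_forall fun k => hsK _)
    have hFtx : Ft x ≤ 1 :=
      le_of_tendsto hcomp (Filter.Eventually.of_forall fun k => hs1 (φ k))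
    exact ⟨x, hFtx, hpx⟩
  -- conclude
  refine Set.Subset.antisymm sub1 fun v hv => ?_
  have hv' : F v ≤ 1 := hv
  have hseq : ∀ k : ℕ, (1 - 1/(k+2) : ℝ) • v ∈ pr '' {u : g | Ft u ≤ 1} := by
    intro k
    apply sub2
    have hk2 : (0:ℝ) < (k:ℝ) + 2 := by positivity
    have hc0 : (0:ℝ) ≤ 1 - 1/((k:ℝ)+2) := by
      rw [sub_nonneg, div_le_one hk2]; linarith
    have hc1 : (1 - 1/((k:ℝ)+2)) < 1 := by
      have : (0:ℝ) < 1/((k:ℝ)+2) := by positivity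
      linarith
    show F ((1 - 1/(k+2) : ℝ) • v) < 1
    rw [hF.2.2.2.1 _ hc0]
    have hFnn : 0 ≤ F v := hF.2.1 v
    nlinarith
  have hlim : Filter.Tendsto (fun k : ℕ => (1 - 1/(k+2) : ℝ) • v) Filter.atTop (nhds v) := by
    have h1 : Filter.Tendsto (fun k : ℕ => (1 - 1/(k+2) : ℝ)) Filter.atTop (nhds 1) := by
      have h2 : Filter.Tendsto (fun k : ℕ => ((k:ℝ) + 2)) Filter.atTop Filter.atTop :=
        Filter.tendsto_atTop_add_const_right _ 2 tendsto_natCast_atTop_atTop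
      have h3 : Filter.Tendsto (fun k : ℕ => 1/((k:ℝ) + 2)) Filter.atTop (nhds 0) := by
        simpa [one_div, Pi.inv_def] using h2.inv_tendsto_atTop
      simpa using tendsto_const_nhds.sub h3
    have := h1.smul_const v
    simpa using this
  exact hclosed.mem_of_tendsto hlim (Filter.Eventually.of_forall hseq)
end

section
/- Let G be a connected Lie group with Lie algebra g, let G' ⊆ G be the connected subgroup generated by a subset S ⊆ g, and let g'' ⊆ g be a linear subspace satisfying [g'', u] ⊆ g'' for all u ∈ S. Then Ad(g)(g'') ⊆ g'' for all g in the closure of G' in G; in particular, if the closure of G' is G, then g'' is an ideal of g. -/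
open NormedSpace

attribute [local instance high] NormedAddCommGroup.toAddCommGroup

open scoped Topology

/-- Invariance under one-parameter subgroups passes to the closure of the generated group:
if a subspace `g''` satisfies `[g'', u] ⊆ g''` for every generator `u ∈ S`, then `g''` is
invariant under every element of the closure of the subgroup `G'` of the adjoint group
generated by `exp(t·ad u)`, `u ∈ S`; in particular, if this closure contains `exp(t·ad x)`
for every `x ∈ g` (i.e. the closure of `G'` is all of `G`), then `g''` is an ideal of `g`. -/
theorem stmt_8 {g : Type*} [NormedAddCommGroup g] [NormedSpace ℝ g] [FiniteDimensional ℝ g]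
    [LieRing g] [LieAlgebra ℝ g]
    (adC : g → (g →L[ℝ] g)) (hadC : ∀ u y : g, adC u y = ⁅u, y⁆)
    (S : Set g) (G' : Submonoid (g →L[ℝ] g))
    (hG' : G' = Submonoid.closure
      {A : g →L[ℝ] g | ∃ u ∈ S, ∃ t : ℝ, A = exp (t • adC u)})
    (g'' : Submodule ℝ g)
    (hinv : ∀ u ∈ S, ∀ y ∈ g'', ⁅y, u⁆ ∈ g'') :
    (∀ A ∈ closure (G' : Set (g →L[ℝ] g)), ∀ y ∈ g'', A y ∈ g'') ∧
      ((∀ (x : g) (t : ℝ), exp (t • adC x) ∈ closure (G' : Set (g →L[ℝ] g))) →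
        ∀ x : g, ∀ y ∈ g'', ⁅x, y⁆ ∈ g'') := by
  have hclosed : IsClosed (g'' : Set g) := Submodule.closed_of_finiteDimensional g''
  -- `g''` is invariant under `exp` of any operator preserving it
  have key : ∀ A : g →L[ℝ] g, (∀ y ∈ g'', A y ∈ g'') →
      ∀ y ∈ g'', exp A y ∈ g'' := by
    intro A hA y hy
    have hpow : ∀ n : ℕ, (A ^ n) y ∈ g'' := by
      intro n
      induction n with
      | zero => simpa using hy
      | succ n ih =>
        rw [pow_succ']
        simpa [ContinuousLinearMap.mul_apply] using hA _ ih
    have hsum : Summable (fun n : ℕ => ((Nat.factorial n : ℝ))⁻¹ • A ^ n) :=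
      NormedSpace.expSeries_summable' (𝕂 := ℝ) A
    have hHasSum : HasSum (fun n : ℕ => ((Nat.factorial n : ℝ))⁻¹ • (A ^ n) y) (exp A y) := by
      have h2 := hsum.hasSum.mapL (ContinuousLinearMap.apply ℝ g y)
      rw [NormedSpace.exp_eq_tsum (𝕂 := ℝ)]
      simpa using h2
    refine hclosed.mem_of_tendsto hHasSum.tendsto_sum_nat ?_
    filter_upwards with n
    exact Submodule.sum_mem _ fun i _ => g''.smul_mem _ (hpow i)
  -- the diagonal of `adC` vanishes (bridging the Lie and normed structures)
  have h00 : ∀ a : g, adC a a = 0 := by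
    intro a
    calc adC a a = ⁅a, a⁆ := hadC a a
      _ = ⁅(0 : g), (0 : g)⁆ := by rw [lie_self, lie_self]
      _ = adC 0 0 := (hadC 0 0).symm
      _ = 0 := by simp
  have swap : ∀ a b : g, adC (a + b) a = adC b a := by
    intro a b
    have h1 : ⁅a, a + b⁆ = ⁅a, b⁆ := by
      rw [← hadC, ← hadC, map_add, h00, zero_add]
    rw [hadC, hadC, ← lie_skew, h1, lie_skew]
  -- normed skew-symmetry of `adC`
  have key2 : ∀ a b : g, adC a b = -(adC b a) := by
    intro a b
    have h := h00 (a + b)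
    rw [map_add, swap a b, show adC (a + b) b = adC a b by rw [add_comm, swap b a]] at h
    have : adC a b + adC b a = 0 := by rw [add_comm]; exact h
    exact eq_neg_of_add_eq_zero_left this
  -- `adC u` preserves `g''` for `u ∈ S`
  have had : ∀ u ∈ S, ∀ y ∈ g'', adC u y ∈ g'' := by
    intro u hu y hy
    rw [key2 u y]
    refine g''.neg_mem ?_
    rw [hadC]
    exact hinv u hu y hy
  -- invariance under `G'`
  have hG'inv : ∀ A ∈ G', ∀ y ∈ g'', A y ∈ g'' := by
    intro A hA
    rw [hG'] at hA
    induction hA using Submonoid.closure_induction with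
    | mem A hA =>
      obtain ⟨u, hu, t, rfl⟩ := hA
      refine key _ ?_
      intro y hy
      simpa using g''.smul_mem t (had u hu y hy)
    | one => intro y hy; simpa using hy
    | mul A B _ _ ihA ihB =>
      intro y hy
      simpa [ContinuousLinearMap.mul_apply] using ihA _ (ihB y hy)
  -- invariance under the topological closure
  have part1 : ∀ A ∈ closure (G' : Set (g →L[ℝ] g)), ∀ y ∈ g'', A y ∈ g'' := by
    intro A hA y hy
    have hcont : Continuous (fun B : g →L[ℝ] g => B y) :=
      (ContinuousLinearMap.apply ℝ g y).continuous
    have hm : (fun B : g →L[ℝ] g => B y) A ∈ closure (g'' : Set g) :=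
      map_mem_closure (f := fun B : g →L[ℝ] g => B y) hcont hA
        (fun B hB => hG'inv B hB y hy)
    rwa [hclosed.closure_eq] at hm
  refine ⟨part1, ?_⟩
  intro hfull x y hy
  -- the curve `t ↦ exp (t • adC x) y` stays in `g''`
  have hcurve : ∀ t : ℝ, exp (t • adC x) y ∈ g'' := fun t =>
    part1 _ (hfull x t) y hy
  -- its derivative at `0` is `adC x y`
  have hd : HasDerivAt (fun t : ℝ => exp (t • adC x)) (adC x) 0 := by
    simpa using hasDerivAt_exp_smul_const (𝕂 := ℝ) (adC x) (0 : ℝ)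
  have hd' : HasDerivAt (fun t : ℝ => exp (t • adC x) y) (adC x y) 0 := by
    simpa using hd.clm_apply (hasDerivAt_const (0 : ℝ) y)
  rw [hasDerivAt_iff_tendsto_slope] at hd'
  have hmem : adC x y ∈ g'' := by
    refine hclosed.mem_of_tendsto hd' ?_
    filter_upwards [self_mem_nhdsWithin] with t ht
    have h0 : exp ((0 : ℝ) • adC x) y = y := by simp
    simp only [slope_def_module]
    exact g''.smul_mem _ (g''.sub_mem (hcurve t) (by simpa [h0] using hcurve 0))
  have : adC x y = ⁅x, y⁆ := hadC x y
  rwa [← this]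
end

section
/- Let G be a connected Lie group with Lie algebra g, S ⊆ g a generating subset for a subalgebra g' whose corresponding connected subgroup is dense in G, and g'' ⊆ g a linear subspace with [g'', u] = 0 for all u ∈ S. Then g'' is contained in the center of g. -/
/-!
Every generator `exp (t • ad u)` with `u ∈ S` fixes each `y ∈ g''`, because `ad u` kills `y`.
Fixing `y` is preserved under products and limits, so every element of the closure of `G'`
fixes `y`; by density this includes the whole one-parameter group `t ↦ exp (t • ad x)` for any
`x ∈ g`, and differentiating at `t = 0` gives `ad x y = 0`.
-/

open NormedSpace

attribute [local instance high] NormedAddCommGroup.toAddCommGroup NormedSpace.toModule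

/-- `LieRing g` carries its own additive structure, a priori unrelated to the normed one;
`hadC` is what ties the two together. -/
theorem lie_swap_eq_zero {𝕜 g : Type*} [NormedField 𝕜] [NormedAddCommGroup g] [NormedSpace 𝕜 g]
    [LieRing g] (adC : g → (g →L[𝕜] g)) (hadC : ∀ u y : g, adC u y = ⁅u, y⁆)
    {x y : g} (h : ⁅x, y⁆ = 0) : ⁅y, x⁆ = 0 := by
  have lie_zero' : ∀ w : g, ⁅w, (0 : g)⁆ = 0 := fun w => by rw [← hadC, map_zero]
  -- `⁅y, x⁆ = -⁅x, 0⁆ = ⁅-x, 0⁆ = adC (-x) 0`, negation taken in the Lie ring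
  rw [← lie_skew, h, ← lie_zero' x, ← @neg_lie g g _ LieRing.toAddCommGroup _ x, ← hadC,
    ← hadC, map_zero, map_zero]

theorem ContinuousLinearMap.apply_eq_of_mem_closure_submonoidClosure {𝕜 E : Type*}
    [NontriviallyNormedField 𝕜] [NormedAddCommGroup E] [NormedSpace 𝕜 E]
    {s : Set (E →L[𝕜] E)} {y : E} (hs : ∀ A ∈ s, A y = y) {A : E →L[𝕜] E}
    (hA : A ∈ closure (Submonoid.closure s : Set (E →L[𝕜] E))) : A y = y := by
  have hclosure : (Submonoid.closure s : Set (E →L[𝕜] E)) ⊆ {A | A y = y} := fun A hA => by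
    induction hA using Submonoid.closure_induction with
    | mem A hA => exact hs A hA
    | one => rfl
    | mul A B _ _ hA hB => exact (congrArg A hB).trans hA
  exact closure_minimal hclosure (isClosed_eq (continuous_eval_const y) continuous_const) hA

section Exp

variable {𝕂 E : Type*} [RCLike 𝕂] [NormedAddCommGroup E] [NormedSpace 𝕂 E] [CompleteSpace E]

theorem ContinuousLinearMap.exp_apply_of_apply_eq_zero {B : E →L[𝕂] E} {y : E} (h : B y = 0) :
    exp B y = y := by
  have hsum := (exp_series_hasSum_exp' (𝕂 := 𝕂) B).mapL (ContinuousLinearMap.apply 𝕂 E y)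
  have hsingle := hasSum_single (f := fun n : ℕ => ((n.factorial⁻¹ : 𝕂) • B ^ n) y) 0
    fun n hn => by
      obtain ⟨m, rfl⟩ := Nat.exists_eq_succ_of_ne_zero hn
      simp [pow_succ, h]
  simpa using hsum.unique hsingle

theorem ContinuousLinearMap.apply_eq_zero_of_forall_exp_smul_apply_eq {A : E →L[𝕂] E} {y : E}
    (h : ∀ t : 𝕂, exp (t • A) y = y) : A y = 0 := by
  have hderiv := (hasDerivAt_exp_smul_const A (0 : 𝕂)).clm_apply (hasDerivAt_const (0 : 𝕂) y)
  simp only [h] at hderiv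
  simpa using hderiv.unique (hasDerivAt_const (0 : 𝕂) y)

end Exp

theorem stmt_9_general {g : Type*} [NormedAddCommGroup g] [NormedSpace ℝ g] [FiniteDimensional ℝ g]
    [LieRing g]
    (adC : g → (g →L[ℝ] g)) (hadC : ∀ u y : g, adC u y = ⁅u, y⁆)
    (S : Set g) (G' : Submonoid (g →L[ℝ] g))
    (hG' : G' = Submonoid.closure
      {A : g →L[ℝ] g | ∃ u ∈ S, ∃ t : ℝ, A = exp (t • adC u)})
    (hdense : ∀ (x : g) (t : ℝ), exp (t • adC x) ∈ closure (G' : Set (g →L[ℝ] g)))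
    (g'' : Submodule ℝ g)
    (hcomm : ∀ u ∈ S, ∀ y ∈ g'', ⁅y, u⁆ = 0) :
    ∀ y ∈ g'', ∀ x : g, ⁅y, x⁆ = 0 := by
  intro y hy x
  have hgen : ∀ A ∈ {A : g →L[ℝ] g | ∃ u ∈ S, ∃ t : ℝ, A = exp (t • adC u)}, A y = y := by
    rintro _ ⟨u, hu, t, rfl⟩
    apply ContinuousLinearMap.exp_apply_of_apply_eq_zero
    rw [smul_apply, hadC, lie_swap_eq_zero adC hadC (hcomm u hu y hy), smul_zero]
  have hfix : ∀ t : ℝ, exp (t • adC x) y = y := fun t =>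
    ContinuousLinearMap.apply_eq_of_mem_closure_submonoidClosure hgen (hG' ▸ hdense x t)
  have had : adC x y = 0 := ContinuousLinearMap.apply_eq_zero_of_forall_exp_smul_apply_eq hfix
  exact lie_swap_eq_zero adC hadC (hadC x y ▸ had)

/-- If a subspace `g''` commutes with every generator `u ∈ S` of a subgroup `G'` of the
adjoint group which is dense (its closure contains `exp(t·ad x)` for every `x ∈ g`,
i.e. the connected subgroup corresponding to the subalgebra generated by `S` is dense in `G`),
then `g''` is contained in the center of `g`. -/
theorem stmt_9 {g : Type*} [NormedAddCommGroup g] [NormedSpace ℝ g] [FiniteDimensional ℝ g]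
    [LieRing g] [LieAlgebra ℝ g]
    (adC : g → (g →L[ℝ] g)) (hadC : ∀ u y : g, adC u y = ⁅u, y⁆)
    (S : Set g) (G' : Submonoid (g →L[ℝ] g))
    (hG' : G' = Submonoid.closure
      {A : g →L[ℝ] g | ∃ u ∈ S, ∃ t : ℝ, A = exp (t • adC u)})
    (hdense : ∀ (x : g) (t : ℝ), exp (t • adC x) ∈ closure (G' : Set (g →L[ℝ] g)))
    (g'' : Submodule ℝ g)
    (hcomm : ∀ u ∈ S, ∀ y ∈ g'', ⁅y, u⁆ = 0) :
    ∀ y ∈ g'', ∀ x : g, ⁅y, x⁆ = 0 :=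
  stmt_9_general adC hadC S G' hG' hdense g'' hcomm
end

section
/- Let π : V₁ → V₂ be a Finsler submersion between finite-dimensional singular norm spaces (V₁,F₁), (V₂,F₂). Then for every nonzero u ∈ V₂ there exists w ∈ V₁ with π(w) = u and F₁(w) = F₂(u) (a horizontal lift exists, though it need not be unique). -/
def IsPosHomogeneous {V : Type*} [AddCommGroup V] [Module ℝ V] (F : V → ℝ) : Prop :=
  ∀ c : ℝ, 0 ≤ c → ∀ v, F (c • v) = c * F v

theorem IsSingularNorm.isPosHomogeneous {V : Type*} [NormedAddCommGroup V] [NormedSpace ℝ V]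
    {F : V → ℝ} (hF : IsSingularNorm F) : IsPosHomogeneous F :=
  hF.2.2.2.1

theorem IsSingularNorm.pos {V : Type*} [NormedAddCommGroup V] [NormedSpace ℝ V] {F : V → ℝ}
    (hF : IsSingularNorm F) {v : V} (hv : v ≠ 0) : 0 < F v :=
  hF.2.2.1 v hv

namespace IsPosHomogeneous

variable {V : Type*} [AddCommGroup V] [Module ℝ V] {F : V → ℝ}

theorem apply_zero (hF : IsPosHomogeneous F) : F 0 = 0 := by
  simpa using hF 0 le_rfl 0

theorem inv_smul_self (hF : IsPosHomogeneous F) {v : V} (hv : 0 < F v) :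
    F ((F v)⁻¹ • v) = 1 := by
  rw [hF _ (inv_nonneg.mpr hv.le), inv_mul_cancel₀ hv.ne']

end IsPosHomogeneous

section Submersion

variable {V₁ V₂ : Type*} [AddCommGroup V₁] [Module ℝ V₁] [AddCommGroup V₂] [Module ℝ V₂]
  {π : V₁ →ₗ[ℝ] V₂} {F₁ : V₁ → ℝ} {F₂ : V₂ → ℝ}

theorem le_of_image_sublevel_subset (hF₁ : IsPosHomogeneous F₁) (hF₂ : IsPosHomogeneous F₂)
    (hπ : π '' {w | F₁ w ≤ 1} ⊆ {u | F₂ u ≤ 1}) {w : V₁} (hw : 0 < F₁ w) :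
    F₂ (π w) ≤ F₁ w := by
  have hunit : F₂ (π ((F₁ w)⁻¹ • w)) ≤ 1 :=
    hπ ⟨_, (hF₁.inv_smul_self hw).le, rfl⟩
  rw [map_smul, hF₂ _ (inv_nonneg.mpr hw.le)] at hunit
  rwa [inv_mul_le_iff₀ hw, mul_one] at hunit

theorem exists_lift_of_image_sublevel_eq (hF₁ : IsPosHomogeneous F₁)
    (hF₂ : IsPosHomogeneous F₂) (hpos₁ : ∀ w, w ≠ 0 → 0 < F₁ w)
    (hπ : π '' {w | F₁ w ≤ 1} = {u | F₂ u ≤ 1}) {u : V₂} (hu : 0 < F₂ u) :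
    ∃ w, π w = u ∧ F₁ w = F₂ u := by
  have hunit := hF₂.inv_smul_self hu
  obtain ⟨w, hw_le, hπw⟩ : (F₂ u)⁻¹ • u ∈ π '' {w | F₁ w ≤ 1} := by
    rw [hπ]
    exact hunit.le
  have hw_ne : w ≠ 0 := by
    rintro rfl
    rw [← hπw, map_zero, hF₂.apply_zero] at hunit
    exact zero_ne_one hunit
  have hw_ge : 1 ≤ F₁ w := by
    calc 1 = F₂ (π w) := by rw [hπw, hunit]
      _ ≤ F₁ w := le_of_image_sublevel_subset hF₁ hF₂ hπ.subset (hpos₁ w hw_ne)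
  have hw_one : F₁ w = 1 := le_antisymm hw_le hw_ge
  refine ⟨F₂ u • w, ?_, ?_⟩
  · rw [map_smul, hπw, smul_smul, mul_inv_cancel₀ hu.ne', one_smul]
  · rw [hF₁ _ hu.le, hw_one, mul_one]

end Submersion

theorem stmt_15_general {V₁ V₂ : Type*} [NormedAddCommGroup V₁] [NormedSpace ℝ V₁]
    [NormedAddCommGroup V₂] [NormedSpace ℝ V₂]
    (π : V₁ →ₗ[ℝ] V₂)
    (F₁ : V₁ → ℝ) (F₂ : V₂ → ℝ) (hF₁ : IsSingularNorm F₁) (hF₂ : IsSingularNorm F₂)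
    (hsub : π '' {w : V₁ | F₁ w ≤ 1} = {u : V₂ | F₂ u ≤ 1}) :
    ∀ u : V₂, u ≠ 0 → ∃ w : V₁, π w = u ∧ F₁ w = F₂ u := fun _ hu =>
  exists_lift_of_image_sublevel_eq hF₁.isPosHomogeneous hF₂.isPosHomogeneous
    (fun _ => hF₁.pos) hsub (hF₂.pos hu)

/-- For a Finsler submersion `π : (V₁,F₁) → (V₂,F₂)` between finite-dimensional singular norm
spaces, every nonzero `u ∈ V₂` admits a horizontal lift: some `w ∈ V₁` with `π w = u` and
`F₁ w = F₂ u`. -/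
theorem stmt_15 {V₁ V₂ : Type*} [NormedAddCommGroup V₁] [NormedSpace ℝ V₁]
    [FiniteDimensional ℝ V₁] [NormedAddCommGroup V₂] [NormedSpace ℝ V₂]
    [FiniteDimensional ℝ V₂]
    (π : V₁ →ₗ[ℝ] V₂)
    (F₁ : V₁ → ℝ) (F₂ : V₂ → ℝ) (hF₁ : IsSingularNorm F₁) (hF₂ : IsSingularNorm F₂)
    (hsub : π '' {w : V₁ | F₁ w ≤ 1} = {u : V₂ | F₂ u ≤ 1}) :
    ∀ u : V₂, u ≠ 0 → ∃ w : V₁, π w = u ∧ F₁ w = F₂ u :=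
  stmt_15_general π F₁ F₂ hF₁ hF₂ hsub
end
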